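/- Fix a real λ > 0 and set x̄ = f_3(λ)(λf_1(λ) − 2f_2(λ))/(λ·f_2(λ)²). Then 1 − F(x̄,λ) = D(λ) / ( 4 f_2(λ) (λf_1(λ) − f_2(λ)) ), where D(λ) = −4 − 4λ − (λ⁴ + 4λ² − 8)e^λ + (4λ − 4)e^{2λ}. -/

import Mathlib

/-- `f k x = e^x - ∑_{i=0}^{k-1} x^i / i!`. -/
noncomputable def f (k : ℕ) (x : ℝ) : ℝ :=
  Real.exp x - ∑ i ∈ Finset.range k, x ^ i / (Nat.factorial i : ℝ)

/-- The function `F(x, λ)` from the paper. -/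
noncomputable def F (x lam : ℝ) : ℝ :=
  (x * lam ^ 5 * f 0 lam / (f 2 lam * f 3 lam) + lam ^ 4 * f 0 lam / (f 2 lam) ^ 2) /
    (x * lam * f 2 lam / f 3 lam + lam * f 1 lam / f 2 lam) ^ 2

/-- The maximizer `x̄ = f₃(λ)(λf₁(λ) - 2f₂(λ))/(λ f₂(λ)²)`. -/
noncomputable def xbar (lam : ℝ) : ℝ :=
  f 3 lam * (lam * f 1 lam - 2 * f 2 lam) / (lam * (f 2 lam) ^ 2)

/-- `D(λ) = -4 - 4λ - (λ⁴ + 4λ² - 8)e^λ + (4λ - 4)e^{2λ}`. -/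
noncomputable def D (lam : ℝ) : ℝ :=
  -4 - 4 * lam - (lam ^ 4 + 4 * lam ^ 2 - 8) * Real.exp lam +
    (4 * lam - 4) * Real.exp (2 * lam)

lemma cubic_lt_exp {x : ℝ} (hx : 0 < x) :
    1 + x + x ^ 2 / 2 + x ^ 3 / 6 ≤ Real.exp x := by
  have h := Real.sum_le_exp_of_nonneg hx.le 4
  have : ∑ i ∈ Finset.range 4, x ^ i / (Nat.factorial i : ℝ)
      = 1 + x + x ^ 2 / 2 + x ^ 3 / 6 := by
    simp [Finset.sum_range_succ, Nat.factorial]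
  linarith [this ▸ h]

set_option maxHeartbeats 1000000 in
lemma key (E a b l g c : ℝ) (ha : a ≠ 0) (hb : b ≠ 0) (hl : l ≠ 0) (hc : c ≠ 0)
    (hg : l * g - a = c) :
    1 - (b * (l * g - 2 * a) / (l * a ^ 2) * l ^ 5 * E / (a * b) + l ^ 4 * E / a ^ 2) /
      (b * (l * g - 2 * a) / (l * a ^ 2) * l * a / b + l * g / a) ^ 2 =
    (4 * a * c - l ^ 4 * E) / (4 * a * c) := by
  have h1 : l * g - 2 * a = c - a := by linarith
  have h2 : l * g = c + a := by linarith
  rw [h1, h2]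
  have hden : b * (c - a) / (l * a ^ 2) * l * a / b + (c + a) / a = 2 * c / a := by
    field_simp; ring
  rw [hden]
  have hnum : b * (c - a) / (l * a ^ 2) * l ^ 5 * E / (a * b) + l ^ 4 * E / a ^ 2
      = l ^ 4 * E * c / a ^ 3 := by
    field_simp; ring
  rw [hnum]
  rw [div_pow]
  field_simp
  ring

/-- For `λ > 0`, `1 - F(x̄, λ) = D(λ) / (4 f₂(λ)(λ f₁(λ) - f₂(λ)))`. -/
theorem one_sub_F_xbar (lam : ℝ) (hlam : 0 < lam) :
    1 - F (xbar lam) lam = D lam / (4 * f 2 lam * (lam * f 1 lam - f 2 lam)) := by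
  have hE : 0 < Real.exp lam := Real.exp_pos lam
  have h2 : 0 < f 2 lam := by
    have := Real.add_one_lt_exp hlam.ne'
    simp [f, Finset.sum_range_succ, Nat.factorial]
    linarith
  have h3 : 0 < f 3 lam := by
    have := cubic_lt_exp hlam
    have hx3 : 0 < lam ^ 3 / 6 := by positivity
    simp [f, Finset.sum_range_succ, Nat.factorial]
    nlinarith
  have h1 : f 1 lam = Real.exp lam - 1 := by
    simp [f, Finset.sum_range_succ, Nat.factorial]
  have h2e : f 2 lam = Real.exp lam - 1 - lam := by
    simp [f, Finset.sum_range_succ, Nat.factorial]; ring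
  have h3e : f 3 lam = Real.exp lam - 1 - lam - lam ^ 2 / 2 := by
    simp [f, Finset.sum_range_succ, Nat.factorial]; ring
  have hfe : f 0 lam = Real.exp lam := by simp [f]
  have hd : 0 < lam * f 1 lam - f 2 lam := by
    have hneg := Real.add_one_lt_exp (neg_ne_zero.mpr hlam.ne')
    rw [Real.exp_neg] at hneg
    have : (1 - lam) * Real.exp lam < 1 := by
      have := (mul_lt_mul_iff_of_pos_right hE).mpr hneg
      rw [inv_mul_cancel₀ hE.ne'] at this
      linarith [this]
    rw [h1, h2e]; nlinarith
  have h2n := h2.ne'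
  have h3n := h3.ne'
  have hdn := hd.ne'
  have hln := hlam.ne'
  have he2 : Real.exp (2 * lam) = Real.exp lam ^ 2 := by
    rw [two_mul, Real.exp_add, sq]
  rw [F, xbar, hfe]
  rw [key (Real.exp lam) (f 2 lam) (f 3 lam) lam (f 1 lam) (lam * f 1 lam - f 2 lam)
    h2n h3n hln hdn rfl]
  congr 1
  rw [h1, h2e, D, he2]
  ring
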